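/- arXiv:2509.24512 — 4 statements merged into one kernel-verified Lean document; each statement's English description precedes it below -/
import Mathlib

section
/- Let (X, d_X) be a complete metric space and f₁,…,f_n : X → X contractions. Then the set-valued map F(S) := ⋃_{i=1}^n f_i(S) on the hyperspace H(X) of nonempty compact subsets of X, with the Hausdorff metric, is Lipschitz with Lipschitz constant at most max_i Lip(f_i) < 1; hence F has a unique fixed point A ∈ H(X) satisfying A = ⋃_{i=1}^n f_i(A). -/
open NNReal ENNReal TopologicalSpace Metric EMetric Set

lemma infEdist_image_le_of_lip {X : Type*} [MetricSpace X] {K : ℝ≥0} {g : X → X}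
    (hg : LipschitzWith K g) (x : X) {t : Set X} (htc : IsCompact t) (ht : t.Nonempty) :
    EMetric.infEdist (g x) (g '' t) ≤ K * EMetric.infEdist x t := by
  obtain ⟨y, hy, hxy⟩ := htc.exists_infEdist_eq_edist ht x
  calc EMetric.infEdist (g x) (g '' t) ≤ edist (g x) (g y) :=
        EMetric.infEdist_le_edist_of_mem (Set.mem_image_of_mem g hy)
    _ ≤ K * edist x y := hg x y
    _ = K * EMetric.infEdist x t := (congrArg ((K : ℝ≥0∞) * ·) hxy).symm

lemma hausdorffEdist_image_le_of_lip {X : Type*} [MetricSpace X] {K : ℝ≥0} {g : X → X}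
    (hg : LipschitzWith K g) {s t : Set X} (hsc : IsCompact s) (htc : IsCompact t)
    (hs : s.Nonempty) (ht : t.Nonempty) :
    EMetric.hausdorffEdist (g '' s) (g '' t) ≤ K * EMetric.hausdorffEdist s t := by
  refine EMetric.hausdorffEdist_le_of_infEdist ?_ ?_
  · rintro _ ⟨x, hx, rfl⟩
    exact (infEdist_image_le_of_lip hg x htc ht).trans
      (mul_le_mul_right (EMetric.infEdist_le_hausdorffEdist_of_mem hx) _)
  · rintro _ ⟨x, hx, rfl⟩
    exact (infEdist_image_le_of_lip hg x hsc hs).trans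
      (mul_le_mul_right ((EMetric.infEdist_le_hausdorffEdist_of_mem hx).trans_eq
        (EMetric.hausdorffEdist_comm)) _)

lemma hausdorffEdist_iUnion_le {X : Type*} [MetricSpace X] {ι : Sort*} (s t : ι → Set X) :
    EMetric.hausdorffEdist (⋃ i, s i) (⋃ i, t i) ≤ ⨆ i, EMetric.hausdorffEdist (s i) (t i) := by
  refine EMetric.hausdorffEdist_le_of_infEdist ?_ ?_
  · intro x hx
    obtain ⟨i, hi⟩ := Set.mem_iUnion.1 hx
    calc EMetric.infEdist x (⋃ i, t i) ≤ EMetric.infEdist x (t i) :=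
          EMetric.infEdist_anti (Set.subset_iUnion t i)
      _ ≤ EMetric.hausdorffEdist (s i) (t i) := EMetric.infEdist_le_hausdorffEdist_of_mem hi
      _ ≤ _ := le_iSup (fun i => EMetric.hausdorffEdist (s i) (t i)) i
  · intro x hx
    obtain ⟨i, hi⟩ := Set.mem_iUnion.1 hx
    calc EMetric.infEdist x (⋃ i, s i) ≤ EMetric.infEdist x (s i) :=
          EMetric.infEdist_anti (Set.subset_iUnion s i)
      _ ≤ EMetric.hausdorffEdist (s i) (t i) := by
          exact (EMetric.infEdist_le_hausdorffEdist_of_mem hi).trans_eq EMetric.hausdorffEdist_comm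
      _ ≤ _ := le_iSup (fun i => EMetric.hausdorffEdist (s i) (t i)) i

/-- Hutchinson: for contractions `f₁,…,f_n` on a complete metric space `X`, the induced
set-valued map `F(S) = ⋃ᵢ fᵢ(S)` on the hyperspace of nonempty compact subsets (with the
Hausdorff metric) is Lipschitz with constant `max_i Lip(f_i) < 1`, hence has a unique
fixed point `A` satisfying `A = ⋃ᵢ fᵢ(A)`. -/
theorem stmt_11 (X : Type*) [MetricSpace X] [CompleteSpace X] [Nonempty X]
    (n : ℕ) (hn : 1 ≤ n) (f : Fin n → X → X) (K : Fin n → ℝ≥0)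
    (hK : ∀ i, K i < 1) (hf : ∀ i, LipschitzWith (K i) (f i)) :
    ∃ F : NonemptyCompacts X → NonemptyCompacts X,
      (∀ S : NonemptyCompacts X, (F S : Set X) = ⋃ i, f i '' (S : Set X)) ∧
      (⨆ i, K i) < 1 ∧
      LipschitzWith (⨆ i, K i) F ∧
      (∃! A : NonemptyCompacts X, F A = A) ∧
      (∃! A : NonemptyCompacts X, (A : Set X) = ⋃ i, f i '' (A : Set X)) := by
  haveI : NeZero n := ⟨by omega⟩
  set F : NonemptyCompacts X → NonemptyCompacts X := fun S =>
    ⟨⟨⋃ i, f i '' (S : Set X),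
      isCompact_iUnion fun i => S.isCompact.image (hf i).continuous⟩,
      Set.Nonempty.mono (Set.subset_iUnion (fun i => f i '' (S : Set X)) 0)
        (S.nonempty.image (f 0))⟩ with hF
  have hcoe : ∀ S : NonemptyCompacts X, (F S : Set X) = ⋃ i, f i '' (S : Set X) := fun S => rfl
  have hsup : (⨆ i, K i) < 1 := by
    obtain ⟨i, hi⟩ := Finite.exists_max K
    exact lt_of_le_of_lt (ciSup_le hi) (hK i)
  have hlip : LipschitzWith (⨆ i, K i) F := by
    intro S T
    have h1 : edist (F S) (F T) =
        EMetric.hausdorffEdist (⋃ i, f i '' (S : Set X)) (⋃ i, f i '' (T : Set X)) := rfl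
    rw [h1]
    calc EMetric.hausdorffEdist (⋃ i, f i '' (S : Set X)) (⋃ i, f i '' (T : Set X))
        ≤ ⨆ i, EMetric.hausdorffEdist (f i '' (S : Set X)) (f i '' (T : Set X)) :=
          hausdorffEdist_iUnion_le _ _
      _ ≤ ⨆ i, (K i : ℝ≥0∞) * EMetric.hausdorffEdist (S : Set X) (T : Set X) :=
          iSup_mono fun i => hausdorffEdist_image_le_of_lip (hf i) S.isCompact T.isCompact S.nonempty T.nonempty
      _ ≤ (⨆ i, (K i : ℝ≥0∞)) * EMetric.hausdorffEdist (S : Set X) (T : Set X) := by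
          rw [ENNReal.iSup_mul]
      _ = ((⨆ i, K i : ℝ≥0) : ℝ≥0∞) * edist S T := by
          rw [ENNReal.coe_iSup (Set.finite_range K).bddAbove]; rfl
  have hC : ContractingWith (⨆ i, K i) F := ⟨hsup, hlip⟩
  haveI : Nonempty (NonemptyCompacts X) :=
    ⟨⟨⟨{Classical.arbitrary X}, isCompact_singleton⟩, Set.singleton_nonempty _⟩⟩
  have hfix : ∃! A : NonemptyCompacts X, F A = A := by
    refine ⟨hC.fixedPoint F, hC.fixedPoint_isFixedPt, fun y hy => ?_⟩
    exact hC.fixedPoint_unique' hy hC.fixedPoint_isFixedPt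
  refine ⟨F, hcoe, hsup, hlip, hfix, ?_⟩
  obtain ⟨A, hA, hAu⟩ := hfix
  refine ⟨A, show (A : Set X) = _ by rw [← hcoe A, hA], fun B hB => ?_⟩
  exact hAu B (NonemptyCompacts.ext ((hcoe B).trans hB.symm))
end

section
/- Fix the maps l and scaling functions S with Σ_i ‖Dl_i · S_i^p‖_∞ < 1. The map ϑ sending the n-tuple q = (q₁,…,q_n) ∈ (L_p^+(I))^n to the unique fixed point f*(q) of the corresponding RB operator is semi-linear: ϑ(q + q') = ϑ(q) + ϑ(q') and ϑ(λq) = λϑ(q) for λ ∈ ℝ≥0, and ϑ is injective. -/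
open NNReal MeasureTheory

/-- With the maps `l` and scaling functions `S` fixed (and the contractivity condition
`Σ_i ‖Dl_i·S_i^p‖_∞ < 1`), the map `ϑ : q ↦ f*(q)` sending an `n`-tuple
`q ∈ (L_p⁺(I))ⁿ` to the fixed point of the corresponding RB operator is semi-linear,
`ϑ(q + q') = ϑ(q) + ϑ(q')` and `ϑ(λq) = λϑ(q)` for `λ ∈ ℝ≥0`, and injective. -/
theorem stmt_15 (n : ℕ) (hn : 0 < n) (x0 xN : ℝ) (hx0 : 0 ≤ x0) (hxx : x0 < xN)
    (I : Set ℝ) (hI : I = Set.Icc x0 xN)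
    (t : Fin (n + 1) → ℝ) (ht : StrictMono t)
    (ht0 : t 0 = x0) (htN : t (Fin.last n) = xN)
    (Ii : Fin n → Set ℝ)
    (hIi : Ii = fun i : Fin n => if (i : ℕ) + 1 = n then Set.Icc (t i.castSucc) (t i.succ)
      else Set.Ico (t i.castSucc) (t i.succ))
    (l : Fin n → ℝ → ℝ)
    (hbij : ∀ i, Set.BijOn (l i) I (Set.Icc (t i.castSucc) (t i.succ)))
    (hcontr : ∀ i, ∃ k : ℝ≥0, k < 1 ∧ LipschitzOnWith k (l i) I)
    (Dl : Fin n → ℝ → ℝ)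
    (hderiv : ∀ i, ∀ x ∈ I, HasDerivAt (l i) (Dl i x) x)
    (hDlpos : ∀ i, ∀ x ∈ I, 0 < Dl i x)
    (linv : Fin n → ℝ → ℝ) (hlinv : ∀ i, ∀ x ∈ I, linv i (l i x) = x)
    (μ : Measure ℝ) (hμ : μ = volume.restrict I)
    (p : ℝ) (hp : 1 ≤ p)
    (S : Fin n → ℝ → ℝ)
    (hSpos : ∀ i, 0 ≤ᵐ[μ] S i)
    (hSbdd : ∀ i, ∃ C : ℝ, ∀ᵐ x ∂μ, S i x ≤ C)
    (B : Fin n → ℝ)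
    (hB : ∀ i, ∀ᵐ x ∂μ, Dl i x * (S i x) ^ p ≤ B i)
    (hBsum : ∑ i, B i < 1)
    (T : (Fin n → ℝ → ℝ) → (ℝ → ℝ) → (ℝ → ℝ))
    (hT : ∀ q g x, T q g x = ∑ i, Set.indicator (Ii i)
      (fun y => q i (linv i y) + S i (linv i y) * g (linv i y)) x)
    (Good : (ℝ → ℝ) → Prop)
    (hGood : Good = fun g => MemLp g (ENNReal.ofReal p) μ ∧ 0 ≤ᵐ[μ] g) :
    -- additivity of ϑ
    (∀ (q q' : Fin n → ℝ → ℝ) (f f' : ℝ → ℝ),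
      (∀ i, Good (q i)) → (∀ i, Good (q' i)) →
      Good f → Good f' → T q f =ᵐ[μ] f → T q' f' =ᵐ[μ] f' →
      T (fun i x => q i x + q' i x) (fun x => f x + f' x) =ᵐ[μ] fun x => f x + f' x) ∧
    -- ℝ≥0-homogeneity of ϑ
    (∀ (c : ℝ≥0) (q : Fin n → ℝ → ℝ) (f : ℝ → ℝ),
      (∀ i, Good (q i)) → Good f → T q f =ᵐ[μ] f →
      T (fun i x => (c : ℝ) * q i x) (fun x => (c : ℝ) * f x) =ᵐ[μ]
        fun x => (c : ℝ) * f x) ∧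
    -- injectivity of ϑ
    (∀ (q q' : Fin n → ℝ → ℝ) (f f' : ℝ → ℝ),
      (∀ i, Good (q i)) → (∀ i, Good (q' i)) →
      Good f → Good f' → T q f =ᵐ[μ] f → T q' f' =ᵐ[μ] f' →
      f =ᵐ[μ] f' → ∀ i, q i =ᵐ[μ] q' i) := by

  subst hμ
  have hImeas : MeasurableSet I := by rw [hI]; exact measurableSet_Icc
  have hIccI : ∀ i : Fin n, Set.Icc (t i.castSucc) (t i.succ) ⊆ I := by
    intro i z hz
    rw [hI]
    constructor
    · calc x0 = t 0 := ht0.symm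
        _ ≤ t i.castSucc := ht.monotone (Fin.zero_le _)
        _ ≤ z := hz.1
    · calc z ≤ t i.succ := hz.2
        _ ≤ t (Fin.last n) := ht.monotone (Fin.le_last _)
        _ = xN := htN
  refine ⟨?_, ?_, ?_⟩
  · intro q q' f f' _ _ _ _ hTq hTq'
    have key : ∀ x, T (fun i x => q i x + q' i x) (fun x => f x + f' x) x
        = T q f x + T q' f' x := by
      intro x
      rw [hT, hT, hT, ← Finset.sum_add_distrib]
      refine Finset.sum_congr rfl fun i _ => ?_
      by_cases hx : x ∈ Ii i
      · simp only [Set.indicator_of_mem hx]; ring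
      · simp only [Set.indicator_of_notMem hx, add_zero]
    filter_upwards [hTq, hTq'] with x h1 h2
    rw [key, h1, h2]
  · intro c q f _ _ hTq
    have key : ∀ x, T (fun i x => (c : ℝ) * q i x) (fun x => (c : ℝ) * f x) x
        = (c : ℝ) * T q f x := by
      intro x
      rw [hT, hT, Finset.mul_sum]
      refine Finset.sum_congr rfl fun i _ => ?_
      by_cases hx : x ∈ Ii i
      · simp only [Set.indicator_of_mem hx]; ring
      · simp only [Set.indicator_of_notMem hx, mul_zero]
    filter_upwards [hTq] with x h1
    rw [key, h1]
  · intro q q' f f' _ _ _ _ hTq hTq' hff' i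
    -- the bad `y`-set and a measurable null superset
    have hnull : (volume.restrict I)
        {y | ¬ (T q f y = f y ∧ (T q' f' y = f' y ∧ f y = f' y))} = 0 :=
      ae_iff.mp (hTq.and (hTq'.and hff'))
    obtain ⟨N, hN0, hNmeas, hNnull⟩ := exists_measurable_superset_of_null hnull
    -- measurable a.e.-version of `l i`
    have hcont : ContinuousOn (l i) I := fun x hx =>
      ((hderiv i x hx).continuousAt).continuousWithinAt
    have haem : AEMeasurable (l i) (volume.restrict I) := hcont.aemeasurable hImeas
    set g := haem.mk (l i) with hg
    have hgmeas : Measurable g := haem.measurable_mk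
    have hgae : l i =ᵐ[volume.restrict I] g := haem.ae_eq_mk
    have hEnull : volume ({x | ¬ l i x = g x} ∩ I) = 0 := by
      have h := ae_iff.mp hgae
      rwa [Measure.restrict_apply' hImeas] at h
    obtain ⟨E, hE0, hEmeas, hEnull'⟩ := exists_measurable_superset_of_null hEnull
    set Q := I ∩ g ⁻¹' N with hQ
    have hQmeas : MeasurableSet Q := hImeas.inter (hgmeas hNmeas)
    set R := Q \ E with hR
    have hRmeas : MeasurableSet R := hQmeas.diff hEmeas
    have hRsubI : R ⊆ I := fun x hx => hx.1.1
    have himg : l i '' R ⊆ N ∩ I := by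
      rintro _ ⟨x, hx, rfl⟩
      have hlg : l i x = g x := by
        by_contra h
        exact hx.2 (hE0 ⟨h, hx.1.1⟩)
      exact ⟨by rw [hlg]; exact hx.1.2, hIccI i ((hbij i).mapsTo hx.1.1)⟩
    have himgnull : volume (l i '' R) = 0 := by
      have h : volume (N ∩ I) = 0 := by
        have := hNnull
        rwa [Measure.restrict_apply' hImeas] at this
      exact measure_mono_null himg h
    have hder : ∀ x ∈ R, HasDerivWithinAt (l i) (Dl i x) R x := fun x hx =>
      (hderiv i x (hRsubI hx)).hasDerivWithinAt
    have hinj : Set.InjOn (l i) R := ((hbij i).injOn).mono hRsubI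
    have hle := lintegral_abs_det_fderiv_le_addHaar_image volume hRmeas
      (fun x hx => (hder x hx).hasFDerivWithinAt) hinj
    have hint : (∫⁻ x in R, ENNReal.ofReal |Dl i x| ∂volume) = 0 := by
      refine le_antisymm ?_ zero_le
      calc (∫⁻ x in R, ENNReal.ofReal |Dl i x| ∂volume)
          ≤ volume (l i '' R) := by
            simpa only [ContinuousLinearMap.det_toSpanSingleton] using hle
        _ = 0 := himgnull
    have hint2 : (∫⁻ x in R, ENNReal.ofReal |deriv (l i) x| ∂volume) = 0 := by
      rw [← hint]
      refine setLIntegral_congr_fun hRmeas (fun x hx => ?_)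
      rw [(hderiv i x (hRsubI hx)).deriv]
    have hRnull : volume R = 0 := by
      have hmz := (setLIntegral_eq_zero_iff hRmeas
        (ENNReal.measurable_ofReal.comp ((measurable_deriv (l i)).abs))).mp hint2
      have hae2 : ∀ᵐ x ∂volume, x ∈ R → ENNReal.ofReal |deriv (l i) x| = 0 := hmz
      refine measure_mono_null (fun x hx => ?_) (ae_iff.mp hae2)
      simp only [Set.mem_setOf_eq, Classical.not_imp]
      refine ⟨hx, ?_⟩
      have hpos : 0 < Dl i x := hDlpos i x (hRsubI hx)
      have : deriv (l i) x = Dl i x := (hderiv i x (hRsubI hx)).deriv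
      rw [this]
      simp [ENNReal.ofReal_eq_zero, abs_of_pos hpos]
      linarith
    have hQnull : (volume.restrict I) Q = 0 := by
      rw [Measure.restrict_apply' hImeas]
      refine measure_mono_null (fun x hx => ?_) (measure_union_null hRnull hEnull')
      by_cases hxE : x ∈ E
      · exact Or.inr hxE
      · exact Or.inl ⟨hx.1, hxE⟩
    have hEnull2 : (volume.restrict I) E = 0 := by
      rw [Measure.restrict_apply' hImeas]
      exact measure_mono_null Set.inter_subset_left hEnull'
    have hept : (volume.restrict I) {x | l i x = t i.succ} = 0 := by
      rw [Measure.restrict_apply' hImeas]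
      have hsub : ({x | l i x = t i.succ} ∩ I).Subsingleton := by
        intro a ha b hb
        exact (hbij i).injOn ha.2 hb.2 (ha.1.trans hb.1.symm)
      exact hsub.measure_zero _
    have hxIae : ∀ᵐ x ∂volume.restrict I, x ∈ I := ae_restrict_mem hImeas
    filter_upwards [measure_eq_zero_iff_ae_notMem.mp hQnull,
      measure_eq_zero_iff_ae_notMem.mp hEnull2,
      measure_eq_zero_iff_ae_notMem.mp hept, hff', hxIae]
      with x hxQ hxE hxept hfx hxI
    -- pointwise argument
    have hlg : l i x = g x := by
      by_contra h
      exact hxE (hE0 ⟨h, hxI⟩)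
    have hyN : l i x ∉ N := by
      intro h
      rw [hlg] at h
      exact hxQ ⟨hxI, h⟩
    have hyP : T q f (l i x) = f (l i x) ∧
        (T q' f' (l i x) = f' (l i x) ∧ f (l i x) = f' (l i x)) := by
      by_contra h
      exact hyN (hN0 h)
    have hxept' : l i x ≠ t i.succ := fun h => hxept h
    have hyIcc : l i x ∈ Set.Icc (t i.castSucc) (t i.succ) := (hbij i).mapsTo hxI
    have hylt : l i x < t i.succ := lt_of_le_of_ne hyIcc.2 hxept'
    have hyIi : l i x ∈ Ii i := by
      simp only [hIi]
      by_cases hc : (i : ℕ) + 1 = n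
      · rw [if_pos hc]; exact hyIcc
      · rw [if_neg hc]; exact ⟨hyIcc.1, hylt⟩
    have hnot : ∀ j : Fin n, j ≠ i → l i x ∉ Ii j := by
      intro j hj
      simp only [hIi]
      rcases hj.lt_or_gt with hji | hij
      · have h1 : (j : ℕ) < (i : ℕ) := hji
        have hin : (i : ℕ) < n := i.isLt
        have hcf : (j : ℕ) + 1 ≠ n := by omega
        rw [if_neg hcf]
        intro hy
        have hts : t j.succ ≤ t i.castSucc := ht.monotone (by
          rw [Fin.le_def, Fin.val_succ, Fin.coe_castSucc]; omega)
        have := hy.2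
        have := hyIcc.1
        linarith
      · have h2 : (i : ℕ) < (j : ℕ) := hij
        have hts : t i.succ ≤ t j.castSucc := ht.monotone (by
          rw [Fin.le_def, Fin.val_succ, Fin.coe_castSucc]; omega)
        intro hy
        have hge : t j.castSucc ≤ l i x := by
          by_cases hc : (j : ℕ) + 1 = n
          · rw [if_pos hc] at hy; exact hy.1
          · rw [if_neg hc] at hy; exact hy.1
        linarith
    have hsum : ∀ (Q : Fin n → ℝ → ℝ) (F : ℝ → ℝ),
        T Q F (l i x) = Q i x + S i x * F x := by
      intro Q F
      rw [hT]
      rw [Finset.sum_eq_single i]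
      · rw [Set.indicator_of_mem hyIi]
        simp only [hlinv i x hxI]
      · intro j _ hj
        exact Set.indicator_of_notMem (hnot j hj) _
      · intro h
        exact absurd (Finset.mem_univ i) h
    have e1 : q i x + S i x * f x = f (l i x) := by rw [← hsum q f]; exact hyP.1
    have e2 : q' i x + S i x * f' x = f' (l i x) := by rw [← hsum q' f']; exact hyP.2.1
    have e3 : f (l i x) = f' (l i x) := hyP.2.2
    rw [hfx] at e1
    show q i x = q' i x
    linarith
end

section
/- Let I = [x₀, x_n], f ∈ C⁺(I), L : C⁺(I) → C⁺(I) bounded semi-linear with Lf(x₀) = f(x₀), Lf(x_n) = f(x_n), and S_i ∈ C⁺(I) with S_∞ := max_i ‖S_i‖_∞ < 1. Let l_i : I → [x_{i−1}, x_i] be contractive homeomorphisms with l_i(x₀) = x_{i−1}, l_i(x_n) = x_i. Then the RB operator Tg := f + (S_i ∘ l_i⁻¹)·((g − Lf) ∘ l_i⁻¹) on each [x_{i−1}, x_i] maps C⁺(I) into itself (assuming g ≥ Lf pointwise or nonnegativity of Tg), satisfies the join-up conditions, and is a contraction with constant S_∞ in the sup-metric; hence it has a unique fixed point f* ∈ C⁺(I),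 which moreover interpolates f at the nodes: f*(x_j) = f(x_j) for j = 0, 1, …, n. -/
open NNReal

/-- Continuous fractal interpolation: with `I = [x₀, x_N]`, a germ `f ∈ C⁺(I)`, a bounded
semi-linear `L : C⁺(I) → C⁺(I)` with `Lf(x₀) = f(x₀)`, `Lf(x_N) = f(x_N)`, scaling
functions `S_i ∈ C⁺(I)` with `S_∞ = max_i ‖S_i‖_∞ ≤ s < 1`, and contractive
homeomorphisms `l_i : I → [x_{i−1}, x_i]` matching endpoints, the RB operator
`Tg = f + (S_i ∘ l_i⁻¹)·((g − Lf) ∘ l_i⁻¹)` on `I_i` maps `C⁺(I)` into itself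
(given nonnegativity of `Tg`), satisfies the join-up conditions (continuity at the
nodes), is an `s`-contraction in the sup-metric, and has a unique fixed point
`f* ∈ C⁺(I)` which interpolates `f` at the nodes. -/
theorem stmt_17 (n : ℕ) (hn : 0 < n) (x0 xN : ℝ) (hx0 : 0 ≤ x0) (hxx : x0 < xN)
    (I : Set ℝ) (hI : I = Set.Icc x0 xN)
    (t : Fin (n + 1) → ℝ) (ht : StrictMono t)
    (ht0 : t 0 = x0) (htN : t (Fin.last n) = xN)
    (Ii : Fin n → Set ℝ)
    (hIi : Ii = fun i : Fin n => if (i : ℕ) + 1 = n then Set.Icc (t i.castSucc) (t i.succ)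
      else Set.Ico (t i.castSucc) (t i.succ))
    (l : Fin n → ℝ → ℝ)
    (hbij : ∀ i, Set.BijOn (l i) I (Set.Icc (t i.castSucc) (t i.succ)))
    (hlcont : ∀ i, ContinuousOn (l i) I)
    (hcontr : ∀ i, ∃ k : ℝ≥0, k < 1 ∧ LipschitzOnWith k (l i) I)
    (hl0 : ∀ i, l i x0 = t i.castSucc) (hlN : ∀ i, l i xN = t i.succ)
    (linv : Fin n → ℝ → ℝ) (hlinv : ∀ i, ∀ x ∈ I, linv i (l i x) = x)
    (Cp : (ℝ → ℝ) → Prop)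
    (hCp : Cp = fun g => ContinuousOn g I ∧ ∀ x ∈ I, 0 ≤ g x)
    (ns : (ℝ → ℝ) → ℝ) (hns : ∀ g, ns g = sSup ((fun x => |g x|) '' I))
    (f : ℝ → ℝ) (hf : Cp f)
    (L : (ℝ → ℝ) → (ℝ → ℝ))
    (hLmaps : ∀ g, Cp g → Cp (L g))
    (hLadd : ∀ g h, L (fun x => g x + h x) = fun x => L g x + L h x)
    (hLsmul : ∀ (c : ℝ≥0) (g : ℝ → ℝ), L (fun x => (c : ℝ) * g x) = fun x => (c : ℝ) * L g x)
    (hLbdd : ∃ M : ℝ, 0 < M ∧ ∀ g, Cp g → ns (L g) ≤ M * ns g)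
    (hLf0 : L f x0 = f x0) (hLfN : L f xN = f xN)
    (S : Fin n → ℝ → ℝ) (hS : ∀ i, Cp (S i))
    (s : ℝ) (hs0 : 0 ≤ s) (hs1 : s < 1) (hsS : ∀ i, ∀ x ∈ I, S i x ≤ s)
    (T : (ℝ → ℝ) → (ℝ → ℝ))
    (hT : ∀ g x, T g x = f x + ∑ i, Set.indicator (Ii i)
      (fun y => S i (linv i y) * (g (linv i y) - L f (linv i y))) x)
    (Good : (ℝ → ℝ) → Prop)
    (hGood : Good = fun g => Cp g ∧ g x0 = f x0 ∧ g xN = f xN)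
    (hTpos : ∀ g, Good g → ∀ x ∈ I, 0 ≤ T g x)
    (d : (ℝ → ℝ) → (ℝ → ℝ) → ℝ)
    (hd : ∀ g h, d g h = sSup ((fun x => |g x - h x|) '' I)) :
    -- T maps C⁺(I) into itself, with join-up (continuity on all of I) and endpoints
    (∀ g, Good g → Good (T g)) ∧
    -- T is a contraction with constant s in the sup-metric
    (∀ g h, Good g → Good h → d (T g) (T h) ≤ s * d g h) ∧
    -- unique fixed point f* ∈ C⁺(I), interpolating f at the nodes
    (∃ fs : ℝ → ℝ, Good fs ∧ (∀ x ∈ I, T fs x = fs x) ∧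
      (∀ j : Fin (n + 1), fs (t j) = f (t j)) ∧
      (∀ g, Good g → (∀ x ∈ I, T g x = g x) → ∀ x ∈ I, g x = fs x)) := by
  classical
  subst hI hCp hGood
  set I := Set.Icc x0 xN with hI
  have hx0I : x0 ∈ I := ⟨le_refl _, hxx.le⟩
  have hxNI : xN ∈ I := ⟨hxx.le, le_refl _⟩
  have hIne : I.Nonempty := ⟨x0, hx0I⟩
  have hIcomp : IsCompact I := isCompact_Icc
  haveI : CompactSpace I := isCompact_iff_compactSpace.mp hIcomp
  have hmono := ht.monotone
  have ha_le : ∀ j : Fin n, x0 ≤ t j.castSucc := fun j => ht0 ▸ hmono (Fin.zero_le _)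
  have hb_le : ∀ j : Fin n, t j.succ ≤ xN := fun j => htN ▸ hmono (Fin.le_last _)
  have hab : ∀ j : Fin n, t j.castSucc < t j.succ := fun j => ht (Fin.castSucc_lt_succ : j.castSucc < j.succ)
  have hJsub : ∀ j : Fin n, Set.Icc (t j.castSucc) (t j.succ) ⊆ I :=
    fun j x hx => ⟨(ha_le j).trans hx.1, hx.2.trans (hb_le j)⟩
  have hIi_sub : ∀ j : Fin n, Ii j ⊆ Set.Icc (t j.castSucc) (t j.succ) := by
    intro j
    simp only [hIi]
    split_ifs
    · exact subset_rfl
    · exact Set.Ico_subset_Icc_self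
  have hIi_diff : ∀ j : Fin n, ∀ x, x ∈ Set.Icc (t j.castSucc) (t j.succ) → x ∉ Ii j →
      x = t j.succ := by
    intro j x hx hnx
    simp only [hIi] at hnx
    split_ifs at hnx with hj
    · exact absurd hx hnx
    · rcases hx with ⟨h1, h2⟩
      by_contra hne
      exact hnx ⟨h1, lt_of_le_of_ne h2 hne⟩
  have hIi_lt : ∀ i : Fin n, (i : ℕ) + 1 ≠ n → ∀ x ∈ Ii i, x < t i.succ := by
    intro i hi x hx
    simp only [hIi, if_neg hi] at hx
    exact hx.2
  have hlinva : ∀ i : Fin n, linv i (t i.castSucc) = x0 := by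
    intro i; rw [← hl0 i, hlinv i x0 hx0I]
  have hlinvb : ∀ i : Fin n, linv i (t i.succ) = xN := by
    intro i; rw [← hlN i, hlinv i xN hxNI]
  -- key pointwise formula on each closed subinterval
  have keyA : ∀ g : ℝ → ℝ, g x0 = f x0 → g xN = f xN → ∀ j : Fin n,
      ∀ x ∈ Set.Icc (t j.castSucc) (t j.succ),
      T g x = f x + S j (linv j x) * (g (linv j x) - L f (linv j x)) := by
    intro g hg0 hgN j x hx
    rw [hT]
    congr 1
    have hsum : (∑ i, Set.indicator (Ii i)
        (fun y => S i (linv i y) * (g (linv i y) - L f (linv i y))) x) =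
        Set.indicator (Ii j) (fun y => S j (linv j y) * (g (linv j y) - L f (linv j y))) x := by
      refine Finset.sum_eq_single j ?_ (fun h => absurd (Finset.mem_univ j) h)
      intro i _ hij
      by_cases hmem : x ∈ Ii i
      · have hxJ := hIi_sub i hmem
        rcases lt_or_gt_of_ne hij with hlt | hgt
        · exfalso
          have hlt' : (i : ℕ) < (j : ℕ) := hlt
          have hi_not : (i : ℕ) + 1 ≠ n := by have := j.isLt; omega
          have h1 : x < t i.succ := hIi_lt i hi_not x hmem
          have h2 : t i.succ ≤ t j.castSucc := by
            apply hmono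
            rw [Fin.le_def, Fin.val_succ, Fin.coe_castSucc]
            exact hlt'
          have h3 := hx.1
          linarith
        · have hgt' : (j : ℕ) < (i : ℕ) := hgt
          have h3 : t j.succ ≤ t i.castSucc := by
            apply hmono
            rw [Fin.le_def, Fin.val_succ, Fin.coe_castSucc]
            exact hgt'
          have hxa : x = t i.castSucc := le_antisymm (hx.2.trans h3) hxJ.1
          rw [Set.indicator_of_mem hmem]
          rw [hxa, hlinva i, hg0, hLf0, sub_self, mul_zero]
      · exact Set.indicator_of_notMem hmem _
    rw [hsum]
    by_cases hmem : x ∈ Ii j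
    · rw [Set.indicator_of_mem hmem]
    · rw [Set.indicator_of_notMem hmem]
      have hxb : x = t j.succ := hIi_diff j x hx hmem
      rw [hxb, hlinvb j, hgN, hLfN, sub_self, mul_zero]
  -- coverage
  have cover : ∀ x ∈ I, ∃ j : Fin n, x ∈ Set.Icc (t j.castSucc) (t j.succ) := by
    intro x hx
    set Fs := Finset.univ.filter (fun j : Fin n => t j.castSucc ≤ x) with hFs
    have h0mem : (⟨0, hn⟩ : Fin n) ∈ Fs := by
      simp only [hFs, Finset.mem_filter, Finset.mem_univ, true_and]
      have h00 : (⟨0, hn⟩ : Fin n).castSucc = (0 : Fin (n + 1)) := by ext; simp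
      rw [h00, ht0]; exact hx.1
    have hne : Fs.Nonempty := ⟨_, h0mem⟩
    have hjmem := Fs.max'_mem hne
    set j := Fs.max' hne with hj
    have hjle : t j.castSucc ≤ x := by
      simp only [hFs, Finset.mem_filter] at hjmem; exact hjmem.2
    refine ⟨j, hjle, ?_⟩
    by_contra hlt
    push_neg at hlt
    have hjn : (j : ℕ) + 1 < n := by
      by_contra h
      have hje : (j : ℕ) + 1 = n := by have := j.isLt; omega
      have hlast : j.succ = Fin.last n := by ext; simp [hje]
      rw [hlast, htN] at hlt
      exact absurd hx.2 (not_le.mpr hlt)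
    have hk : (⟨(j : ℕ) + 1, hjn⟩ : Fin n) ∈ Fs := by
      simp only [hFs, Finset.mem_filter, Finset.mem_univ, true_and]
      have hcs : (⟨(j : ℕ) + 1, hjn⟩ : Fin n).castSucc = j.succ := by ext; simp
      rw [hcs]; exact hlt.le
    have hle := Fs.le_max' _ hk
    rw [← hj, Fin.le_def] at hle
    simp at hle
  -- continuity of linv on each subinterval
  have hlinv_cont : ∀ i : Fin n,
      ContinuousOn (linv i) (Set.Icc (t i.castSucc) (t i.succ)) ∧
      Set.MapsTo (linv i) (Set.Icc (t i.castSucc) (t i.succ)) I := by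
    intro i
    have hmaps : Set.MapsTo (linv i) (Set.Icc (t i.castSucc) (t i.succ)) I := by
      intro y hy
      obtain ⟨x, hxI, rfl⟩ := (hbij i).surjOn hy
      rw [hlinv i x hxI]; exact hxI
    refine ⟨?_, hmaps⟩
    have he_cont : Continuous ((hbij i).equiv (l i)) :=
      (hlcont i).mapsToRestrict (hbij i).mapsTo
    let H := Continuous.homeoOfEquivCompactToT2 (f := (hbij i).equiv (l i)) he_cont
    have hrestr : ∀ y : (Set.Icc (t i.castSucc) (t i.succ) : Set ℝ),
        linv i y = ((H.symm y : I) : ℝ) := by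
      intro y
      obtain ⟨x, hxI, hxy⟩ := (hbij i).surjOn y.2
      have h1 : H ⟨x, hxI⟩ = y := by
        apply Subtype.ext
        exact hxy
      rw [← h1, Homeomorph.symm_apply_apply]
      show linv i (l i x) = x
      exact hlinv i x hxI
    rw [continuousOn_iff_continuous_restrict]
    have : Set.restrict (Set.Icc (t i.castSucc) (t i.succ)) (linv i) =
        (Subtype.val ∘ H.symm) := by
      funext y
      exact hrestr y
    change Continuous (Set.restrict (Set.Icc (t i.castSucc) (t i.succ)) (linv i))
    rw [this]
    exact continuous_subtype_val.comp H.symm.continuous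
  have hLfc : ContinuousOn (L f) I := (hLmaps f hf).1
  -- continuity of T g
  have hTcont : ∀ g : ℝ → ℝ, ContinuousOn g I → g x0 = f x0 → g xN = f xN →
      ContinuousOn (T g) I := by
    intro g hgc hg0 hgN
    have hpiece : ∀ j : Fin n, ContinuousOn (T g) (Set.Icc (t j.castSucc) (t j.succ)) := by
      intro j
      have h1 : ContinuousOn
          (fun x => f x + S j (linv j x) * (g (linv j x) - L f (linv j x)))
          (Set.Icc (t j.castSucc) (t j.succ)) := by
        refine ContinuousOn.add (hf.1.mono (hJsub j)) (ContinuousOn.mul ?_ (ContinuousOn.sub ?_ ?_))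
        · exact (hS j).1.comp (hlinv_cont j).1 (hlinv_cont j).2
        · exact hgc.comp (hlinv_cont j).1 (hlinv_cont j).2
        · exact hLfc.comp (hlinv_cont j).1 (hlinv_cont j).2
      exact h1.congr (fun x hx => keyA g hg0 hgN j x hx)
    have hcu : ContinuousOn (T g) (⋃ j : Fin n, Set.Icc (t j.castSucc) (t j.succ)) :=
      (locallyFinite_of_finite _).continuousOn_iUnion (fun j => isClosed_Icc) hpiece
    exact hcu.mono (fun x hx => Set.mem_iUnion.mpr (cover x hx))
  -- node values of T g
  have htjI : ∀ j : Fin (n + 1), t j ∈ I :=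
    fun j => ⟨ht0 ▸ hmono (Fin.zero_le j), htN ▸ hmono (Fin.le_last j)⟩
  have keyNode : ∀ g : ℝ → ℝ, g x0 = f x0 → g xN = f xN → ∀ j : Fin (n + 1),
      T g (t j) = f (t j) := by
    intro g hg0 hgN j
    by_cases hj : (j : ℕ) < n
    · have hji : t j = t (⟨(j : ℕ), hj⟩ : Fin n).castSucc := congrArg t (Fin.ext (by simp))
      have hmem : t (⟨(j : ℕ), hj⟩ : Fin n).castSucc ∈
          Set.Icc (t (⟨(j : ℕ), hj⟩ : Fin n).castSucc) (t (⟨(j : ℕ), hj⟩ : Fin n).succ) :=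
        ⟨le_refl _, (hab _).le⟩
      rw [hji, keyA g hg0 hgN _ _ hmem, hlinva, hg0, hLf0, sub_self, mul_zero, add_zero]
    · have hj2 := j.isLt
      have hj' : j = Fin.last n := by ext; simp only [Fin.val_last]; omega
      subst hj'
      have hn1 : n - 1 < n := by omega
      have hbi : t (⟨n - 1, hn1⟩ : Fin n).succ = t (Fin.last n) := by congr 1; ext; simp; omega
      have hmem : t (Fin.last n) ∈
          Set.Icc (t (⟨n - 1, hn1⟩ : Fin n).castSucc) (t (⟨n - 1, hn1⟩ : Fin n).succ) := by
        rw [hbi]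
        exact ⟨(hbi ▸ (hab _).le : t (⟨n - 1, hn1⟩ : Fin n).castSucc ≤ t (Fin.last n)), le_refl _⟩
      rw [keyA g hg0 hgN _ _ hmem, ← hbi, hlinvb, hgN, hLfN, sub_self, mul_zero, add_zero]
  -- part 1
  have hmain1 : ∀ g : ℝ → ℝ,
      ((ContinuousOn g I ∧ ∀ x ∈ I, 0 ≤ g x) ∧ g x0 = f x0 ∧ g xN = f xN) →
      ((ContinuousOn (T g) I ∧ ∀ x ∈ I, 0 ≤ T g x) ∧ T g x0 = f x0 ∧ T g xN = f xN) := by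
    intro g hg
    obtain ⟨⟨hgc, hgpos⟩, hg0, hgN⟩ := hg
    have hend0 : T g x0 = f x0 := by
      have := keyNode g hg0 hgN 0
      rwa [ht0] at this
    have hendN : T g xN = f xN := by
      have := keyNode g hg0 hgN (Fin.last n)
      rwa [htN] at this
    exact ⟨⟨hTcont g hgc hg0 hgN, hTpos g ⟨⟨hgc, hgpos⟩, hg0, hgN⟩⟩, hend0, hendN⟩
  -- sup metric facts
  have bdd : ∀ g h : ℝ → ℝ, ContinuousOn g I → ContinuousOn h I →
      BddAbove ((fun x => |g x - h x|) '' I) :=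
    fun g h hg hh => (hIcomp.image_of_continuousOn ((hg.sub hh).abs)).bddAbove
  have hd_le : ∀ g h : ℝ → ℝ, ContinuousOn g I → ContinuousOn h I →
      ∀ x ∈ I, |g x - h x| ≤ d g h := by
    intro g h hg hh x hx
    rw [hd]
    exact le_csSup (bdd g h hg hh) ⟨x, hx, rfl⟩
  have hd_nonneg : ∀ g h : ℝ → ℝ, ContinuousOn g I → ContinuousOn h I → 0 ≤ d g h :=
    fun g h hg hh => le_trans (abs_nonneg _) (hd_le g h hg hh x0 hx0I)
  have hd_sup_le : ∀ g h : ℝ → ℝ, ∀ C : ℝ, (∀ x ∈ I, |g x - h x| ≤ C) → d g h ≤ C := by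
    intro g h C hb
    rw [hd]
    exact csSup_le (hIne.image _) (by rintro y ⟨x, hx, rfl⟩; exact hb x hx)
  have hd_symm : ∀ g h : ℝ → ℝ, d g h = d h g := by
    intro g h
    have habs : (fun x => |g x - h x|) = fun x => |h x - g x| := funext fun x => abs_sub_comm _ _
    rw [hd g h, habs, ← hd h g]
  -- part 2
  have hmain2 : ∀ g h : ℝ → ℝ,
      ((ContinuousOn g I ∧ ∀ x ∈ I, 0 ≤ g x) ∧ g x0 = f x0 ∧ g xN = f xN) →
      ((ContinuousOn h I ∧ ∀ x ∈ I, 0 ≤ h x) ∧ h x0 = f x0 ∧ h xN = f xN) →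
      d (T g) (T h) ≤ s * d g h := by
    intro g h hg hh
    obtain ⟨⟨hgc, hgpos⟩, hg0, hgN⟩ := hg
    obtain ⟨⟨hhc, hhpos⟩, hh0, hhN⟩ := hh
    apply hd_sup_le
    intro x hx
    obtain ⟨j, hj⟩ := cover x hx
    rw [keyA g hg0 hgN j x hj, keyA h hh0 hhN j x hj]
    have hu : linv j x ∈ I := (hlinv_cont j).2 hj
    have heq : f x + S j (linv j x) * (g (linv j x) - L f (linv j x)) -
        (f x + S j (linv j x) * (h (linv j x) - L f (linv j x))) =
        S j (linv j x) * (g (linv j x) - h (linv j x)) := by ring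
    rw [heq, abs_mul, abs_of_nonneg ((hS j).2 _ hu)]
    exact mul_le_mul (hsS j _ hu) (hd_le g h hgc hhc _ hu) (abs_nonneg _) hs0
  refine ⟨hmain1, hmain2, ?_⟩
  -- part 3 : fixed point
  set g : ℕ → ℝ → ℝ := fun k => T^[k] f with hgdef
  have hGoodf : ((ContinuousOn f I ∧ ∀ x ∈ I, 0 ≤ f x) ∧ f x0 = f x0 ∧ f xN = f xN) :=
    ⟨hf, rfl, rfl⟩
  have hGoodk : ∀ k, ((ContinuousOn (g k) I ∧ ∀ x ∈ I, 0 ≤ g k x) ∧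
      g k x0 = f x0 ∧ g k xN = f xN) := by
    intro k
    induction k with
    | zero => exact hGoodf
    | succ k ih =>
      have : g (k + 1) = T (g k) := Function.iterate_succ_apply' T k f
      rw [this]
      exact hmain1 (g k) ih
  have hgsucc : ∀ k, g (k + 1) = T (g k) := fun k => Function.iterate_succ_apply' T k f
  have hdk : ∀ k, d (g (k + 1)) (g k) ≤ s ^ k * d (g 1) (g 0) := by
    intro k
    induction k with
    | zero => simp
    | succ k ih =>
      have h1 : d (g (k + 2)) (g (k + 1)) ≤ s * d (g (k + 1)) (g k) := by
        have h2 := hmain2 (g (k + 1)) (g k) (hGoodk (k + 1)) (hGoodk k)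
        rw [← hgsucc (k + 1), ← hgsucc k] at h2
        exact h2
      calc d (g (k + 2)) (g (k + 1)) ≤ s * d (g (k + 1)) (g k) := h1
        _ ≤ s * (s ^ k * d (g 1) (g 0)) := mul_le_mul_of_nonneg_left ih hs0
        _ = s ^ (k + 1) * d (g 1) (g 0) := by ring
  -- Cauchy sequence in C(I, ℝ)
  let Fk : ℕ → C(I, ℝ) := fun k =>
    ⟨Set.restrict I (g k), continuousOn_iff_continuous_restrict.mp (hGoodk k).1.1⟩
  have hFk_apply : ∀ k (p : I), Fk k p = g k p := fun k p => rfl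
  have hcau : CauchySeq Fk := by
    apply cauchySeq_of_le_geometric s (d (g 1) (g 0)) hs1
    intro k
    have h1 : dist (Fk k) (Fk (k + 1)) ≤ d (g (k + 1)) (g k) := by
      rw [ContinuousMap.dist_le (hd_nonneg _ _ (hGoodk (k + 1)).1.1 (hGoodk k).1.1)]
      intro p
      rw [Real.dist_eq, abs_sub_comm]
      exact hd_le _ _ (hGoodk (k + 1)).1.1 (hGoodk k).1.1 p p.2
    calc dist (Fk k) (Fk (k + 1)) ≤ d (g (k + 1)) (g k) := h1
      _ ≤ s ^ k * d (g 1) (g 0) := hdk k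
      _ = d (g 1) (g 0) * s ^ k := mul_comm _ _
  obtain ⟨F, hF⟩ := cauchySeq_tendsto_of_complete hcau
  set fs : ℝ → ℝ := fun x => if hx : x ∈ I then F ⟨x, hx⟩ else f x with hfsdef
  have hfsF : ∀ (x : ℝ) (hx : x ∈ I), fs x = F ⟨x, hx⟩ := fun x hx => dif_pos hx
  have hfs_cont : ContinuousOn fs I := by
    rw [continuousOn_iff_continuous_restrict]
    have : Set.restrict I fs = F := by
      funext p
      exact hfsF p p.2
    change Continuous (Set.restrict I fs)
    rw [this]
    exact F.continuous
  have hptwise : ∀ (x : ℝ) (hx : x ∈ I),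
      Filter.Tendsto (fun k => g k x) Filter.atTop (nhds (fs x)) := by
    intro x hx
    have h1 : Filter.Tendsto (fun k => Fk k ⟨x, hx⟩) Filter.atTop (nhds (F ⟨x, hx⟩)) :=
      ((continuous_eval_const (⟨x, hx⟩ : I)).tendsto F).comp hF
    rw [hfsF x hx]
    exact h1
  have hfs0 : fs x0 = f x0 := by
    have hconst : (fun k => g k x0) = fun _ => f x0 := funext fun k => (hGoodk k).2.1
    have h1 := hptwise x0 hx0I
    rw [hconst] at h1
    exact (tendsto_nhds_unique h1 tendsto_const_nhds)
  have hfsN : fs xN = f xN := by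
    have hconst : (fun k => g k xN) = fun _ => f xN := funext fun k => (hGoodk k).2.2
    have h1 := hptwise xN hxNI
    rw [hconst] at h1
    exact (tendsto_nhds_unique h1 tendsto_const_nhds)
  have hfs_nonneg : ∀ x ∈ I, 0 ≤ fs x :=
    fun x hx => ge_of_tendsto' (hptwise x hx) (fun k => (hGoodk k).1.2 x hx)
  have hGoodfs : ((ContinuousOn fs I ∧ ∀ x ∈ I, 0 ≤ fs x) ∧ fs x0 = f x0 ∧ fs xN = f xN) :=
    ⟨⟨hfs_cont, hfs_nonneg⟩, hfs0, hfsN⟩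
  have hdfk : ∀ k, d fs (g k) ≤ dist F (Fk k) := by
    intro k
    apply hd_sup_le
    intro x hx
    have h1 := ContinuousMap.dist_apply_le_dist (f := F) (g := Fk k) ⟨x, hx⟩
    rw [Real.dist_eq] at h1
    rw [hfsF x hx]
    exact h1
  have hdistF0 : Filter.Tendsto (fun k => dist F (Fk k)) Filter.atTop (nhds 0) := by
    have h1 := tendsto_iff_dist_tendsto_zero.mp hF
    have : (fun k => dist F (Fk k)) = fun k => dist (Fk k) F := funext fun k => dist_comm _ _
    rw [this]
    exact h1
  have hfix : ∀ x ∈ I, T fs x = fs x := by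
    intro x hx
    have h1 : Filter.Tendsto (fun k => g (k + 1) x) Filter.atTop (nhds (fs x)) :=
      (hptwise x hx).comp (Filter.tendsto_add_atTop_nat 1)
    have h2 : Filter.Tendsto (fun k => g (k + 1) x) Filter.atTop (nhds (T fs x)) := by
      rw [tendsto_iff_dist_tendsto_zero]
      apply squeeze_zero (fun k => dist_nonneg) (g := fun k => s * dist F (Fk k))
      · intro k
        have hTgk := hmain1 (g k) (hGoodk k)
        have hTfs := hmain1 fs hGoodfs
        have hb1 : |T (g k) x - T fs x| ≤ d (T (g k)) (T fs) :=
          hd_le _ _ hTgk.1.1 hTfs.1.1 x hx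
        have hb2 : d (T (g k)) (T fs) ≤ s * d (g k) fs := hmain2 _ _ (hGoodk k) hGoodfs
        have hb3 : d (g k) fs ≤ dist F (Fk k) := by
          rw [hd_symm]
          exact hdfk k
        rw [Real.dist_eq, hgsucc k]
        calc |T (g k) x - T fs x| ≤ d (T (g k)) (T fs) := hb1
          _ ≤ s * d (g k) fs := hb2
          _ ≤ s * dist F (Fk k) := mul_le_mul_of_nonneg_left hb3 hs0
      · have := hdistF0.const_mul s
        simpa using this
    exact tendsto_nhds_unique h2 h1
  refine ⟨fs, hGoodfs, hfix, ?_, ?_⟩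
  · intro j
    rw [← hfix (t j) (htjI j)]
    exact keyNode fs hfs0 hfsN j
  · intro g0 hg0 hg0fix x hx
    obtain ⟨⟨hg0c, hg0pos⟩, hg00, hg0N⟩ := hg0
    have himg : (fun x => |T g0 x - T fs x|) '' I = (fun x => |g0 x - fs x|) '' I := by
      apply Set.image_congr
      intro y hy
      rw [hg0fix y hy, hfix y hy]
    have h1 : d g0 fs ≤ s * d g0 fs := by
      have h2 := hmain2 g0 fs ⟨⟨hg0c, hg0pos⟩, hg00, hg0N⟩ hGoodfs
      rw [hd (T g0) (T fs), himg, ← hd g0 fs] at h2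
      exact h2
    have h0 : 0 ≤ d g0 fs := hd_nonneg _ _ hg0c hfs_cont
    have hzero : d g0 fs ≤ 0 := by nlinarith
    have h3 : |g0 x - fs x| ≤ 0 := (hd_le g0 fs hg0c hfs_cont x hx).trans hzero
    have h4 := abs_nonneg (g0 x - fs x)
    have h5 : |g0 x - fs x| = 0 := le_antisymm h3 h4
    have h6 : g0 x - fs x = 0 := abs_eq_zero.mp h5
    linarith
end

section
/- Suppose the fractal operator F^S : X⁺ → X⁺ (mapping f to the fixed point f(S) of the RB operator with germ f) is well-defined with S_∞ < 1 and L a bounded semi-linear operator with norm ‖I − L‖. Then ‖f(S) − f‖ ≤ (S_∞/(1 − S_∞))·‖I − L‖·‖f‖ for every f, and hence ‖F^S f‖ ≤ (1 + (S_∞/(1 − S_∞))‖I − L‖)·‖f‖; if moreover F^S has 1 in its point spectrum (i.e., F^S g = g for some nonzero g), then 1 ≤ ‖F^S‖ ≤ 1 + (S_∞/(1 − S_∞))‖I − L‖. -/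
/-! The triangle inequality through `f` turns `‖f(S) - f‖ ≤ S_∞ ‖f(S) - Lf‖` into
`(1 - S_∞) ‖f(S) - f‖ ≤ S_∞ ‖(I - L) f‖`; the bound on `‖F^S‖` is then a bound on a supremum of
ratios, and a nonzero fixed point realises the ratio `1`. -/

section NormBounds

variable {V : Type*} [NormedAddCommGroup V]

theorem norm_sub_le_div_one_sub_mul_of_norm_sub_le {s : ℝ} (hs0 : 0 ≤ s) (hs1 : s < 1)
    {a f b : V} (h : ‖a - f‖ ≤ s * ‖a - b‖) : ‖a - f‖ ≤ s / (1 - s) * ‖f - b‖ := by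
  have htri : ‖a - b‖ ≤ ‖a - f‖ + ‖f - b‖ := norm_sub_le_norm_sub_add_norm_sub a f b
  rw [div_mul_eq_mul_div, le_div_iff₀ (by linarith)]
  nlinarith

theorem norm_le_one_add_mul_of_norm_sub_le {C : ℝ} {x f : V} (h : ‖x - f‖ ≤ C * ‖f‖) :
    ‖x‖ ≤ (1 + C) * ‖f‖ :=
  calc ‖x‖ = ‖x - f + f‖ := by rw [sub_add_cancel]
    _ ≤ ‖x - f‖ + ‖f‖ := norm_add_le _ _
    _ ≤ (1 + C) * ‖f‖ := by linarith

variable {G : V → V} {K : ℝ}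

theorem norm_apply_div_norm_le (hG : ∀ f, ‖G f‖ ≤ K * ‖f‖) (f : {f : V // f ≠ 0}) :
    ‖G f‖ / ‖(f : V)‖ ≤ K :=
  (div_le_iff₀ (norm_pos_iff.mpr f.2)).mpr (hG f)

theorem le_iSup_norm_apply_div_norm (hG : ∀ f, ‖G f‖ ≤ K * ‖f‖) (f : {f : V // f ≠ 0}) :
    ‖G f‖ / ‖(f : V)‖ ≤ ⨆ f : {f : V // f ≠ 0}, ‖G f‖ / ‖(f : V)‖ :=
  le_ciSup (f := fun f : {f : V // f ≠ 0} ↦ ‖G f‖ / ‖(f : V)‖)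
    ⟨K, Set.forall_mem_range.mpr (norm_apply_div_norm_le hG)⟩ f

theorem one_le_iSup_norm_apply_div_norm_of_apply_eq_self (hG : ∀ f, ‖G f‖ ≤ K * ‖f‖) {g : V}
    (hg : g ≠ 0) (hGg : G g = g) : 1 ≤ ⨆ f : {f : V // f ≠ 0}, ‖G f‖ / ‖(f : V)‖ := by
  simpa [hGg, hg] using le_iSup_norm_apply_div_norm hG ⟨g, hg⟩

theorem iSup_norm_apply_div_norm_le [Nonempty {f : V // f ≠ 0}] (hG : ∀ f, ‖G f‖ ≤ K * ‖f‖) :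
    ⨆ f : {f : V // f ≠ 0}, ‖G f‖ / ‖(f : V)‖ ≤ K :=
  ciSup_le (norm_apply_div_norm_le hG)

end NormBounds

/-- Norm estimates for the fractal operator `F^S : f ↦ f(S)`: from the fixed-point
equation one has `‖f(S) − f‖ ≤ S_∞·‖f(S) − Lf‖`, and hence
`‖f(S) − f‖ ≤ (S_∞/(1−S_∞))·‖I − L‖·‖f‖` and
`‖F^S f‖ ≤ (1 + (S_∞/(1−S_∞))·‖I − L‖)·‖f‖`. If moreover `1` lies in the point
spectrum of `F^S` (i.e. `F^S g = g` for some `g ≠ 0`), then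
`1 ≤ ‖F^S‖ ≤ 1 + (S_∞/(1−S_∞))·‖I − L‖`. -/
theorem stmt_19 (V : Type*) [NormedAddCommGroup V] [NormedSpace ℝ V]
    (L : V →L[ℝ] V) (Φ : V → V) (Sinf : ℝ) (hS0 : 0 ≤ Sinf) (hS1 : Sinf < 1)
    -- the key estimate coming from the self-referential fixed-point equation (5.11)
    (hkey : ∀ f : V, ‖Φ f - f‖ ≤ Sinf * ‖Φ f - L f‖)
    (opn : (V → V) → ℝ)
    (hopn : ∀ G : V → V, opn G = ⨆ f : {f : V // f ≠ 0}, ‖G (f : V)‖ / ‖(f : V)‖) :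
    (∀ f : V, ‖Φ f - f‖ ≤ Sinf / (1 - Sinf) * ‖ContinuousLinearMap.id ℝ V - L‖ * ‖f‖) ∧
    (∀ f : V, ‖Φ f‖ ≤ (1 + Sinf / (1 - Sinf) * ‖ContinuousLinearMap.id ℝ V - L‖) * ‖f‖) ∧
    ((∃ g : V, g ≠ 0 ∧ Φ g = g) →
      1 ≤ opn Φ ∧ opn Φ ≤ 1 + Sinf / (1 - Sinf) * ‖ContinuousLinearMap.id ℝ V - L‖) := by
  set C := Sinf / (1 - Sinf) * ‖ContinuousLinearMap.id ℝ V - L‖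
  have hdist : ∀ f, ‖Φ f - f‖ ≤ C * ‖f‖ := fun f ↦
    calc ‖Φ f - f‖ ≤ Sinf / (1 - Sinf) * ‖f - L f‖ :=
          norm_sub_le_div_one_sub_mul_of_norm_sub_le hS0 hS1 (hkey f)
      _ ≤ Sinf / (1 - Sinf) * (‖ContinuousLinearMap.id ℝ V - L‖ * ‖f‖) := by
          gcongr
          simpa using (ContinuousLinearMap.id ℝ V - L).le_opNorm f
      _ = C * ‖f‖ := by ring
  have hbound : ∀ f, ‖Φ f‖ ≤ (1 + C) * ‖f‖ := fun f ↦
    norm_le_one_add_mul_of_norm_sub_le (hdist f)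
  refine ⟨hdist, hbound, fun ⟨g, hg, hΦg⟩ ↦ ?_⟩
  have : Nonempty {f : V // f ≠ 0} := ⟨⟨g, hg⟩⟩
  rw [hopn]
  exact ⟨one_le_iSup_norm_apply_div_norm_of_apply_eq_self hbound hg hΦg,
    iSup_norm_apply_div_norm_le hbound⟩
end
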